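/- Consider the polynomial ring ℂ[x₁,x₂,z] with bracket {f,g} = Σ_{i=1,2; j=0,1,2} a_{i,j} zʲ (∂_{xᵢ}f · ∂_z g − ∂_z f · ∂_{xᵢ} g) for constants a_{i,j} ∈ ℂ. If this bracket satisfies the Jacobi identity, then the polynomials P₁(z) = a_{1,0} + a_{1,1}z + a_{1,2}z² and P₂(z) = a_{2,0} + a_{2,1}z + a_{2,2}z² satisfy P₁′·P₂ = P₁·P₂′. -/

import Mathlib

open MvPolynomial

/-!
Write `Pᵢ(z)` for `Σⱼ a_{i,j} zʲ`. The bracket is then `Σᵢ Pᵢ(z) ∂_{xᵢ} ∧ ∂_z`, so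
`{x₁, x₂} = 0`, `{xᵢ, z} = Pᵢ(z)` and `{xᵢ, g} = Pᵢ(z) ∂_z g`. The Jacobi identity for
`(x₁, x₂, z)` therefore reads `P₁ P₂′ − P₂ P₁′ + 0 = 0`, an identity in `ℂ[z] ⊆ ℂ[x₁, x₂, z]`.
-/

theorem pderiv_toMvPolynomial {R σ : Type*} [CommSemiring R] (z : σ) (p : Polynomial R) :
    pderiv z (p.toMvPolynomial z) = (Polynomial.derivative p).toMvPolynomial z := by
  simp [Polynomial.toMvPolynomial]

section BivectorBracket

variable {R σ ι : Type*} [CommRing R] [Fintype ι] (x : ι → σ) (z : σ) (P : ι → Polynomial R)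

noncomputable def bivectorBracket (f g : MvPolynomial σ R) : MvPolynomial σ R :=
  ∑ i, (P i).toMvPolynomial z * (pderiv (x i) f * pderiv z g - pderiv z f * pderiv (x i) g)

theorem bivectorBracket_swap (f g : MvPolynomial σ R) :
    bivectorBracket x z P g f = -bivectorBracket x z P f g := by
  simp only [bivectorBracket, ← Finset.sum_neg_distrib]
  exact Finset.sum_congr rfl fun _ _ => by ring

@[simp]
theorem bivectorBracket_zero_right (f : MvPolynomial σ R) : bivectorBracket x z P f 0 = 0 := by
  simp [bivectorBracket]

variable {x z}

theorem bivectorBracket_X_left (hx : Function.Injective x) (hz : ∀ i, x i ≠ z) (k : ι)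
    (g : MvPolynomial σ R) :
    bivectorBracket x z P (X (x k)) g = (P k).toMvPolynomial z * pderiv z g := by
  rw [bivectorBracket, Finset.sum_eq_single k]
  · simp [pderiv_X_of_ne (hz k)]
  · intro i _ hik
    simp [pderiv_X_of_ne (hz k), pderiv_X_of_ne (hx.ne (Ne.symm hik))]
  · simp

theorem derivative_mul_eq_mul_derivative_of_jacobi (hx : Function.Injective x) (hz : ∀ i, x i ≠ z)
    {k l : ι}
    (hjac : let br := bivectorBracket x z P
      br (X (x k)) (br (X (x l)) (X z)) + br (X (x l)) (br (X z) (X (x k)))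
        + br (X z) (br (X (x k)) (X (x l))) = 0) :
    Polynomial.derivative (P k) * P l = P k * Polynomial.derivative (P l) := by
  have bracket_X_X : bivectorBracket x z P (X (x k)) (X (x l)) = 0 := by
    simp [bivectorBracket_X_left P hx hz, pderiv_X_of_ne (hz l)]
  have bracket_X_z (i : ι) :
      bivectorBracket x z P (X (x i)) (X z) = (P i).toMvPolynomial z := by
    simp [bivectorBracket_X_left P hx hz]
  simp only [bracket_X_X, bracket_X_z, bivectorBracket_swap x z P (X (x k)),
    bivectorBracket_zero_right, bivectorBracket_X_left P hx hz, map_neg, pderiv_toMvPolynomial,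
    add_zero] at hjac
  apply Polynomial.toMvPolynomial_injective z
  simp only [map_mul]
  linear_combination -hjac

end BivectorBracket

/-- For the bracket `{f,g} = Σ a_{i,j} z^j (∂_{xᵢ}f ∂_z g − ∂_z f ∂_{xᵢ} g)`
on `ℂ[x₁,x₂,z]`, the Jacobi identity forces `P₁' P₂ = P₁ P₂'`. -/
theorem jacobi_identity_gives_wronskian (a : Fin 2 → Fin 3 → ℂ)
    (br : MvPolynomial (Fin 3) ℂ → MvPolynomial (Fin 3) ℂ → MvPolynomial (Fin 3) ℂ)
    (hbr : ∀ f g, br f g = ∑ i : Fin 2, ∑ j : Fin 3,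
        C (a i j) * (X (2 : Fin 3)) ^ (j : ℕ) *
          (pderiv (i.castSucc) f * pderiv (2 : Fin 3) g
            - pderiv (2 : Fin 3) f * pderiv (i.castSucc) g))
    (hjac : ∀ f g h, br f (br g h) + br g (br h f) + br h (br f g) = 0) :
    Polynomial.derivative (∑ j : Fin 3, Polynomial.C (a 0 j) * Polynomial.X ^ (j : ℕ)) *
        (∑ j : Fin 3, Polynomial.C (a 1 j) * Polynomial.X ^ (j : ℕ))
      = (∑ j : Fin 3, Polynomial.C (a 0 j) * Polynomial.X ^ (j : ℕ)) *
        Polynomial.derivative (∑ j : Fin 3, Polynomial.C (a 1 j) * Polynomial.X ^ (j : ℕ)) := by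
  let P (i : Fin 2) : Polynomial ℂ := ∑ j : Fin 3, Polynomial.C (a i j) * Polynomial.X ^ (j : ℕ)
  have br_eq : br = bivectorBracket Fin.castSucc 2 P := by
    ext1 f; ext1 g
    simp only [hbr, bivectorBracket, P, map_sum, map_mul, map_pow, Polynomial.toMvPolynomial_C,
      Polynomial.toMvPolynomial_X, Finset.sum_mul]
  subst br_eq
  exact derivative_mul_eq_mul_derivative_of_jacobi P (Fin.castSucc_injective 2)
    (fun i => (Fin.castSucc_lt_last i).ne) (hjac _ _ _)
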